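/- arXiv:1502.06372 — 5 statements merged into one kernel-verified Lean document; each statement's English description precedes it below -/
import Mathlib

section
/- Let p ≥ 1, m = 2^p, and let k, l ∈ {0, …, m−1} with k ≠ l. For i, j ∈ {0, …, m−1} let S(i,j) be the 2×2 matrix with rows (H(m)_{i,k}, H(m)_{i,l}) and (H(m)_{j,k}, H(m)_{j,l}). Then the number of pairs (i,j) with 0 ≤ i ≤ j ≤ m−1 and perm S(i,j) = 0 equals m²/4, independently of the choice of the input pair (k,l). -/
/-!
The permanent `H i k * H j l + H i l * H j k` of a `±1` matrix vanishes iff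
`χ i ≠ χ j`, where `χ x = H x k * H x l = H x (k ⊕ l)` is a character of `(ℤ/2)^p`,
nontrivial because `k ≠ l`. Flipping a bit `u` of `x` at which `k` and `l` differ negates
`χ x`, so `(i, j) ↦ (i, j ⊕ 2^u)` exchanges the ordered pairs with `χ i = χ j` and those
with `χ i ≠ χ j`: there are `m²/2` of the latter, and half as many with `i ≤ j`, since they
all have `i ≠ j`.
-/

/-- The `2^p × 2^p` Sylvester matrix over `ℤ`: entry `(i,j)` is `(−1)^(i⊙j)`,
where `i⊙j` is the bitwise dot product (number of positions where both binary
expansions have a 1, i.e. the popcount of `i &&& j`). -/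
def sylv (p : ℕ) : Matrix (Fin (2^p)) (Fin (2^p)) ℤ :=
  fun i j => (-1 : ℤ) ^ (((Finset.range p).filter
    (fun t => Nat.testBit (i.val &&& j.val) t)).card)

/-- The permanent of a square integer matrix: `perm A = Σ_σ ∏_i A_{i,σ(i)}`. -/
def perm {n : ℕ} (A : Matrix (Fin n) (Fin n) ℤ) : ℤ :=
  ∑ σ : Equiv.Perm (Fin n), ∏ i, A i (σ i)

open Finset

lemma perm_fin_two (a b c d : ℤ) : perm !![a, b; c, d] = a * d + b * c := by
  rw [perm, show (univ : Finset (Equiv.Perm (Fin 2))) = {1, Equiv.swap 0 1} by decide,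
    sum_pair (by decide)]
  simp [Fin.prod_univ_two]

lemma Int.units_coe_mul_add_coe_mul_eq_zero_iff (a b c d : ℤˣ) :
    (a * d + b * c : ℤ) = 0 ↔ a * b ≠ c * d := by
  revert a b c d; decide

/-- The entries of `sylv` as units, factored over the bits so that they are visibly
multiplicative under XOR in each argument. -/
def sylvSign (p x y : ℕ) : ℤˣ :=
  ∏ t ∈ range p, if x.testBit t && y.testBit t then -1 else 1

lemma sylv_eq_sylvSign (p : ℕ) (i j : Fin (2 ^ p)) : sylv p i j = sylvSign p i j := by
  rw [sylv, sylvSign, prod_ite, prod_const, prod_const_one, mul_one]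
  simp [Nat.testBit_and]

lemma sylvSign_comm (p x y : ℕ) : sylvSign p x y = sylvSign p y x := by
  simp only [sylvSign, Bool.and_comm]

lemma sylvSign_xor_left (p x y z : ℕ) :
    sylvSign p (x ^^^ y) z = sylvSign p x z * sylvSign p y z := by
  rw [sylvSign, sylvSign, sylvSign, ← prod_mul_distrib]
  refine prod_congr rfl fun t _ => ?_
  rw [Nat.testBit_xor]
  cases x.testBit t <;> cases y.testBit t <;> cases z.testBit t <;> simp

lemma sylvSign_xor_right (p x y z : ℕ) :
    sylvSign p x (y ^^^ z) = sylvSign p x y * sylvSign p x z := by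
  simp only [sylvSign_comm p x, sylvSign_xor_left]

lemma sylvSign_two_pow_left {p u : ℕ} (hu : u < p) (y : ℕ) :
    sylvSign p (2 ^ u) y = if y.testBit u then -1 else 1 := by
  simp only [sylvSign, Nat.testBit_two_pow, decide_eq_true_eq, Bool.and_eq_true, ite_and]
  simp [prod_ite_eq, hu]

section Counting

variable {α : Type*} [Fintype α]

lemma two_mul_card_filter_le_and_ne [LinearOrder α] {β : Type*} [DecidableEq β] (f : α → β) :
    2 * #{ij : α × α | ij.1 ≤ ij.2 ∧ f ij.1 ≠ f ij.2} =
      #{ij : α × α | f ij.1 ≠ f ij.2} := by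
  rw [← card_filter_add_card_filter_not (s := {ij : α × α | f ij.1 ≠ f ij.2})
    (fun ij => ij.1 ≤ ij.2), filter_filter, filter_filter, two_mul]
  congr 1
  · simp only [and_comm]
  · refine card_nbij' Prod.swap Prod.swap ?_ ?_ (fun _ _ => rfl) (fun _ _ => rfl)
    · intro ij h
      simp only [coe_filter, mem_univ, true_and, Set.mem_ofPred_eq, Prod.fst_swap,
        Prod.snd_swap] at h ⊢
      exact ⟨h.2.symm, (lt_of_le_of_ne h.1 fun e => h.2 (e ▸ rfl)).not_ge⟩
    · intro ij h
      simp only [coe_filter, mem_univ, true_and, Set.mem_ofPred_eq, Prod.fst_swap,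
        Prod.snd_swap] at h ⊢
      exact ⟨(not_le.mp h.2).le, h.1.symm⟩

lemma two_mul_card_filter_ne_of_neg (f : α → ℤˣ) (e : α → α) (he : Function.Involutive e)
    (hfe : ∀ x, f (e x) = -f x) :
    2 * #{ij : α × α | f ij.1 ≠ f ij.2} = Fintype.card α * Fintype.card α := by
  have hswap : #{ij : α × α | f ij.1 ≠ f ij.2} = #{ij : α × α | ¬ f ij.1 ≠ f ij.2} := by
    refine card_nbij' (fun ij => (ij.1, e ij.2)) (fun ij => (ij.1, e ij.2)) ?_ ?_
      (fun ij _ => by simp [he ij.2]) (fun ij _ => by simp [he ij.2]) <;>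
    · intro ij
      simp [hfe, Int.units_ne_iff_eq_neg]
  rw [two_mul]
  nth_rw 2 [hswap]
  rw [card_filter_add_card_filter_not, card_univ, Fintype.card_prod]

end Counting

lemma Nat.exists_lt_testBit_of_ne_zero {m p : ℕ} (hm : m < 2 ^ p) (h0 : m ≠ 0) :
    ∃ u < p, m.testBit u = true := by
  obtain ⟨u, hu⟩ := Nat.exists_testBit_of_ne_zero h0
  exact ⟨u, (Nat.pow_lt_pow_iff_right one_lt_two).mp
    ((Nat.ge_two_pow_of_testBit hu).trans_lt hm), hu⟩

theorem stmt4_general (p : ℕ) (k l : Fin (2^p)) (hkl : k ≠ l) :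
    (Finset.univ.filter (fun ij : Fin (2^p) × Fin (2^p) =>
        ij.1 ≤ ij.2 ∧
        perm !![sylv p ij.1 k, sylv p ij.1 l;
                sylv p ij.2 k, sylv p ij.2 l] = 0)).card
      = 2^p * 2^p / 4 := by
  obtain ⟨u, hup, hu⟩ := Nat.exists_lt_testBit_of_ne_zero (Nat.xor_lt_two_pow k.isLt l.isLt)
    (by simpa [Fin.val_inj] using hkl)
  set f : Fin (2 ^ p) → ℤˣ := fun x => sylvSign p x (k ^^^ l)
  have hperm : ∀ i j : Fin (2 ^ p),
      perm !![sylv p i k, sylv p i l; sylv p j k, sylv p j l] = 0 ↔ f i ≠ f j := by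
    intro i j
    simp only [sylv_eq_sylvSign, perm_fin_two, Int.units_coe_mul_add_coe_mul_eq_zero_iff, f,
      sylvSign_xor_right]
  let e : Fin (2 ^ p) → Fin (2 ^ p) := fun x =>
    ⟨x ^^^ 2 ^ u, Nat.xor_lt_two_pow x.isLt (Nat.pow_lt_pow_right one_lt_two hup)⟩
  have he : Function.Involutive e := fun x => Fin.ext (by simp [e])
  have hfe : ∀ x, f (e x) = -f x := fun x => by
    simp [f, e, sylvSign_xor_left, sylvSign_two_pow_left hup, hu]
  have hcount := two_mul_card_filter_ne_of_neg f e he hfe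
  rw [← two_mul_card_filter_le_and_ne, Fintype.card_fin] at hcount
  simp_rw [hperm]
  omega

/-- for two bosons entering an arbitrary pair of distinct modes `k ≠ l`
of the `m = 2^p` mode Sylvester interferometer, the number of unordered output pairs
`(i,j)` whose scattering matrix has vanishing permanent (suppressed outputs) is
`m²/4`, independently of the choice of `(k,l)`. -/
theorem stmt4 (p : ℕ) (hp : 1 ≤ p) (k l : Fin (2^p)) (hkl : k ≠ l) :
    (Finset.univ.filter (fun ij : Fin (2^p) × Fin (2^p) =>
        ij.1 ≤ ij.2 ∧
        perm !![sylv p ij.1 k, sylv p ij.1 l;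
                sylv p ij.2 k, sylv p ij.2 l] = 0)).card
      = 2^p * 2^p / 4 :=
  stmt4_general p k l hkl
end

section
/- Let p ≥ 1, m = 2^p, and let k, l ∈ {0, …, m−1} with k ≠ l. For i, j ∈ {0, …, m−1} let S(i,j) be the 2×2 matrix with rows (H(m)_{i,k}, H(m)_{i,l}) and (H(m)_{j,k}, H(m)_{j,l}). Then the number of pairs (i,j) with 0 ≤ i ≤ j ≤ m−1 and det S(i,j) = 0 equals m(m+2)/4, independently of the choice of the input pair (k,l). -/
/-!
Write `χ_d(i) = (-1)^(i⊙d)`; then `H_{i,k} H_{i,l} = χ_{k⊕l}(i)`, since `⊙` is additive in the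
second argument for the bitwise xor. As all entries are `±1`, `det S(i,j) = 0` exactly when
`H_{i,k} H_{i,l} = H_{j,k} H_{j,l}`, i.e. when `i` and `j` lie in the same fibre of the character
`χ_{k⊕l}`. For `k ≠ l` this character is nontrivial: flipping a bit at which `k ⊕ l` is set
negates it, so both fibres have `m/2` elements. The pairs `i ≤ j` inside a common fibre number
`2 · (m/2)(m/2 + 1)/2 = m(m+2)/4`.
-/

open Finset

section Counting

variable {α : Type*} [Fintype α]

theorem card_filter_eq_card_filter_eq_neg {β : Type*} [InvolutiveNeg β] [DecidableEq β]
    {f : α → β} {g : α → α} (hg : Function.Involutive g) (hfg : ∀ i, f (g i) = -f i) (s : β) :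
    #{i | f i = s} = #{i | f i = -s} :=
  card_equiv hg.toPerm fun i => by simp [hfg, neg_inj]

theorem two_mul_card_filter_eq_of_involutive {f : α → ℤ} {g : α → α} (hg : Function.Involutive g)
    (hfg : ∀ i, f (g i) = -f i) (hf : ∀ i, f i * f i = 1) (j : α) :
    2 * #{i | f i = f j} = Fintype.card α := by
  have hne : ∀ i, f i ≠ f j ↔ f i = -f j := fun i => by
    rcases mul_self_eq_one_iff.mp (hf i) with hi | hi <;>
      rcases mul_self_eq_one_iff.mp (hf j) with hj | hj <;> simp [hi, hj]
  have hsplit := card_filter_add_card_filter_not (s := univ) fun i => f i = f j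
  simp only [hne, ← card_filter_eq_card_filter_eq_neg hg hfg, card_univ] at hsplit
  omega

theorem card_filter_prod_eq_sum {r : α → α → Prop} [DecidableRel r] :
    #{ij : α × α | r ij.1 ij.2} = ∑ j, #{i | r i j} := by
  simp only [card_filter, Fintype.sum_prod_type]
  exact sum_comm

theorem two_mul_card_filter_le_and_eq [LinearOrder α] {β : Type*} [DecidableEq β] (f : α → β) :
    2 * #{ij : α × α | ij.1 ≤ ij.2 ∧ f ij.1 = f ij.2}
      = #{ij : α × α | f ij.1 = f ij.2} + Fintype.card α := by
  set A := univ.filter fun ij : α × α => ij.1 ≤ ij.2 ∧ f ij.1 = f ij.2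
  set B := univ.filter fun ij : α × α => ij.2 ≤ ij.1 ∧ f ij.1 = f ij.2
  have hswap : #A = #B :=
    card_equiv (Equiv.prodComm α α) fun ij => by
      simp only [A, B, mem_filter, mem_univ, true_and, Equiv.prodComm_apply, Prod.fst_swap,
        Prod.snd_swap, eq_comm]
  have hunion : A ∪ B = univ.filter fun ij : α × α => f ij.1 = f ij.2 := by
    ext ij
    simp only [A, B, mem_union, mem_filter, mem_univ, true_and]
    rcases le_total ij.1 ij.2 with h | h <;> tauto
  have hinter : A ∩ B = (univ : Finset α).diag := by
    ext ⟨i, j⟩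
    simp only [A, B, mem_inter, mem_filter, mem_univ, true_and, mem_diag]
    constructor
    · exact fun h => le_antisymm h.1.1 h.2.1
    · rintro rfl
      simp
  have := card_union_add_card_inter A B
  rw [hunion, hinter, diag_card, card_univ, ← hswap] at this
  omega

end Counting

theorem Matrix.det_fin_two_of_eq_zero_iff {R : Type*} [CommRing R] {a b c d : R}
    (ha : a * a = 1) (hc : c * c = 1) : Matrix.det !![a, b; c, d] = 0 ↔ a * b = c * d := by
  rw [Matrix.det_fin_two_of, sub_eq_zero]
  constructor
  · intro h
    linear_combination (-(a * c)) * h - a * b * hc + c * d * ha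
  · intro h
    linear_combination (-(a * c)) * h - a * d * hc + b * c * ha

namespace Sylvester

def bitSign (p x : ℕ) : ℤ := ∏ t ∈ range p, if x.testBit t then -1 else 1

theorem sylv_eq_bitSign (p : ℕ) (i j : Fin (2 ^ p)) :
    sylv p i j = bitSign p (i.val &&& j.val) := by
  simp only [sylv, bitSign, card_filter, ← prod_pow_eq_pow_sum]
  refine prod_congr rfl fun t _ => ?_
  split_ifs <;> simp

theorem bitSign_mul_self (p x : ℕ) : bitSign p x * bitSign p x = 1 := by
  rw [bitSign, ← prod_mul_distrib]
  exact prod_eq_one fun t _ => by split_ifs <;> norm_num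

theorem bitSign_xor (p x y : ℕ) : bitSign p (x ^^^ y) = bitSign p x * bitSign p y := by
  rw [bitSign, bitSign, bitSign, ← prod_mul_distrib]
  refine prod_congr rfl fun t _ => ?_
  rw [Nat.testBit_xor]
  cases x.testBit t <;> cases y.testBit t <;> simp

theorem bitSign_two_pow {p t : ℕ} (ht : t < p) : bitSign p (2 ^ t) = -1 := by
  simp [bitSign, Nat.testBit_two_pow, ht]

theorem bitSign_xor_two_pow_and {p t d : ℕ} (ht : t < p) (hd : d.testBit t) (i : ℕ) :
    bitSign p ((i ^^^ 2 ^ t) &&& d) = -bitSign p (i &&& d) := by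
  rw [Nat.and_xor_distrib_right, bitSign_xor, Nat.two_pow_and, hd, Bool.toNat_true, mul_one,
    bitSign_two_pow ht, mul_neg_one]

theorem exists_testBit_lt_of_ne_zero {p d : ℕ} (h0 : d ≠ 0) (hd : d < 2 ^ p) :
    ∃ t < p, d.testBit t := by
  obtain ⟨t, ht⟩ := Nat.exists_testBit_of_ne_zero h0
  refine ⟨t, lt_of_not_ge fun hpt => ?_, ht⟩
  rw [Nat.testBit_lt_two_pow (hd.trans_le (Nat.pow_le_pow_right two_pos hpt))] at ht
  exact Bool.false_ne_true ht

theorem two_mul_card_bitSign_and_eq {p d : ℕ} (h0 : d ≠ 0) (hd : d < 2 ^ p) (j : Fin (2 ^ p)) :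
    2 * #{i : Fin (2 ^ p) | bitSign p (i.val &&& d) = bitSign p (j.val &&& d)} = 2 ^ p := by
  obtain ⟨t, ht, hdt⟩ := exists_testBit_lt_of_ne_zero h0 hd
  have hlt : ∀ i : Fin (2 ^ p), i.val ^^^ 2 ^ t < 2 ^ p := fun i =>
    Nat.xor_lt_two_pow i.isLt (Nat.pow_lt_pow_right one_lt_two ht)
  simpa using two_mul_card_filter_eq_of_involutive (g := fun i => ⟨i.val ^^^ 2 ^ t, hlt i⟩)
    (fun i => Fin.ext (by simp)) (fun i => bitSign_xor_two_pow_and ht hdt i)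
    (fun i => bitSign_mul_self _ _) j

end Sylvester

open Sylvester

theorem stmt5_general (p : ℕ) (k l : Fin (2^p)) (hkl : k ≠ l) :
    (Finset.univ.filter (fun ij : Fin (2^p) × Fin (2^p) =>
        ij.1 ≤ ij.2 ∧
        Matrix.det !![sylv p ij.1 k, sylv p ij.1 l;
                      sylv p ij.2 k, sylv p ij.2 l] = 0)).card
      = 2^p * (2^p + 2) / 4 := by
  set χ : Fin (2 ^ p) → ℤ := fun i => bitSign p (i.val &&& (k.val ^^^ l.val))
  have hdet : ∀ i j : Fin (2 ^ p),
      Matrix.det !![sylv p i k, sylv p i l; sylv p j k, sylv p j l] = 0 ↔ χ i = χ j := by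
    intro i j
    simp only [Matrix.det_fin_two_of_eq_zero_iff, sylv_eq_bitSign, bitSign_mul_self, ← bitSign_xor,
      ← Nat.and_xor_distrib_left, χ]
  have hhalf := two_mul_card_bitSign_and_eq (Nat.xor_eq_zero_iff.not.mpr (Fin.val_ne_of_ne hkl))
    (Nat.xor_lt_two_pow k.isLt l.isLt)
  have hsame : 2 * #{ij : Fin (2 ^ p) × Fin (2 ^ p) | χ ij.1 = χ ij.2} = 2 ^ p * 2 ^ p := by
    rw [card_filter_prod_eq_sum (r := fun i j => χ i = χ j), mul_sum]
    simp only [χ, hhalf, sum_const, card_univ, Fintype.card_fin, smul_eq_mul]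
  have hpairs := two_mul_card_filter_le_and_eq χ
  rw [Fintype.card_fin] at hpairs
  simp only [hdet]
  refine (Nat.div_eq_of_eq_mul_right four_pos ?_).symm
  linarith

/-- for two fermions entering an arbitrary pair of distinct modes `k ≠ l`
of the `m = 2^p` mode Sylvester interferometer, the number of unordered output pairs
`(i,j)` whose scattering matrix has vanishing determinant (suppressed outputs) is
`m(m+2)/4`, independently of the choice of `(k,l)`. -/
theorem stmt5 (p : ℕ) (hp : 1 ≤ p) (k l : Fin (2^p)) (hkl : k ≠ l) :
    (Finset.univ.filter (fun ij : Fin (2^p) × Fin (2^p) =>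
        ij.1 ≤ ij.2 ∧
        Matrix.det !![sylv p ij.1 k, sylv p ij.1 l;
                      sylv p ij.2 k, sylv p ij.2 l] = 0)).card
      = 2^p * (2^p + 2) / 4 :=
  stmt5_general p k l hkl
end

section
/- Let p = k + q with k, q ≥ 0, set m = 2^p and n = 2^q, fix c ∈ {0, …, 2^k−1}, and let g : {0, …, n−1} → {0, …, m−1} be any function. Let S be the n×n matrix with entries S_{i,j} = H(m)_{g(i), c·n + j}, and let S′ be the n×n matrix with entries S′_{i,j} = H(n)_{g(i) mod n, j}. Then perm S = (∏_{i=0}^{n−1} H(2^k)_{⌊g(i)/n⌋, c}) · perm S′ and det S = (∏_{i=0}^{n−1} H(2^k)_{⌊g(i)/n⌋, c}) · det S′. In particular perm S = 0 if and only if perm S′ = 0, and det S = 0 if and only if det S′ = 0. -/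
/-! Writing a row index as `u·2^q + v` and a column index as `a·2^q + b` (with `v, b < 2^q`),
the bits of the two indices split into a high block (`u`, `a`) and a low block (`v`, `b`), so the
bitwise dot product is additive over the blocks and `H(2^(k+q)) = H(2^k) ⊗ H(2^q)` entrywise.
Since the columns of `S` all lie in the `c`-th block, every row `i` of `S` is row `g(i) mod n`
of `H(n)` scaled by the sign `H(2^k)_{⌊g(i)/n⌋, c}`: that is, `S = diag(signs) · S′`, and both the
permanent and the determinant pull out the product of the signs, which is a unit. -/

def bitDot (p x y : ℕ) : ℕ :=
  ((Finset.range p).filter (fun t => Nat.testBit (x &&& y) t)).card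

theorem sylv_apply (p : ℕ) (i j : Fin (2^p)) : sylv p i j = (-1) ^ bitDot p i j := rfl

theorem sylv_apply_ne_zero (p : ℕ) (i j : Fin (2^p)) : sylv p i j ≠ 0 :=
  pow_ne_zero _ (by norm_num)

section Blocks

variable {q v : ℕ}

theorem testBit_mul_two_pow_add_of_lt (u : ℕ) (hv : v < 2^q) {t : ℕ} (ht : t < q) :
    Nat.testBit (u * 2^q + v) t = Nat.testBit v t := by
  rw [Nat.mul_comm, Nat.testBit_two_pow_mul_add u hv, if_pos ht]

theorem testBit_mul_two_pow_add_add (u : ℕ) (hv : v < 2^q) (s : ℕ) :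
    Nat.testBit (u * 2^q + v) (q + s) = Nat.testBit u s := by
  rw [Nat.mul_comm, Nat.testBit_two_pow_mul_add u hv, if_neg (by omega), Nat.add_sub_cancel_left]

theorem bitDot_mul_two_pow_add (k : ℕ) {b : ℕ} (u a : ℕ) (hv : v < 2^q) (hb : b < 2^q) :
    bitDot (k + q) (u * 2^q + v) (a * 2^q + b) = bitDot k u a + bitDot q v b := by
  simp only [bitDot, Finset.card_filter, Nat.testBit_and]
  rw [Nat.add_comm k q, Finset.sum_range_add, Nat.add_comm]
  congr 1
  · refine Finset.sum_congr rfl fun s _ => ?_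
    rw [testBit_mul_two_pow_add_add u hv, testBit_mul_two_pow_add_add a hb]
  · refine Finset.sum_congr rfl fun t ht => ?_
    have ht : t < q := Finset.mem_range.mp ht
    rw [testBit_mul_two_pow_add_of_lt u hv ht, testBit_mul_two_pow_add_of_lt a hb ht]

theorem sylv_add_apply {k : ℕ} {i j : Fin (2^(k + q))} {u a : Fin (2^k)} {v b : Fin (2^q)}
    (hi : i.val = u.val * 2^q + v.val) (hj : j.val = a.val * 2^q + b.val) :
    sylv (k + q) i j = sylv k u a * sylv q v b := by
  rw [sylv_apply, hi, hj, bitDot_mul_two_pow_add k _ _ v.isLt b.isLt, pow_add]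
  rfl

end Blocks

theorem perm_diagonal_mul {n : ℕ} (d : Fin n → ℤ) (A : Matrix (Fin n) (Fin n) ℤ) :
    perm (Matrix.diagonal d * A) = (∏ i, d i) * perm A := by
  simp only [perm, Matrix.diagonal_mul, Finset.mul_sum, Finset.prod_mul_distrib]

/-- reduction of the `n`-particle scattering matrix on `m = 2^(k+q)` modes
(input on modes `c·n,…,c·n+n−1`, output configuration `g`) to the `n = 2^q` mode
Sylvester interferometer with output modes `g(i) mod n`:
`perm S = (∏ i, H(2^k)_{⌊g(i)/n⌋,c}) · perm S′` and likewise for the determinant;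
in particular `perm S = 0 ↔ perm S′ = 0` and `det S = 0 ↔ det S′ = 0`. -/
theorem stmt7 (k q : ℕ) (c : Fin (2^k)) (g : Fin (2^q) → Fin (2^(k+q)))
    (col : Fin (2^q) → Fin (2^(k+q))) (hcol : ∀ j, (col j).val = c.val * 2^q + j.val)
    (gdiv : Fin (2^q) → Fin (2^k)) (hgdiv : ∀ i, (gdiv i).val = (g i).val / 2^q)
    (gmod : Fin (2^q) → Fin (2^q)) (hgmod : ∀ i, (gmod i).val = (g i).val % 2^q)
    (S S' : Matrix (Fin (2^q)) (Fin (2^q)) ℤ)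
    (hS : ∀ i j, S i j = sylv (k+q) (g i) (col j))
    (hS' : ∀ i j, S' i j = sylv q (gmod i) j) :
    perm S = (∏ i, sylv k (gdiv i) c) * perm S' ∧
    S.det = (∏ i, sylv k (gdiv i) c) * S'.det ∧
    (perm S = 0 ↔ perm S' = 0) ∧
    (S.det = 0 ↔ S'.det = 0) := by
  set d : Fin (2^q) → ℤ := fun i => sylv k (gdiv i) c
  have hS_eq : S = Matrix.diagonal d * S' := by
    ext i j
    have hg : (g i).val = (gdiv i).val * 2^q + (gmod i).val := by
      rw [hgdiv, hgmod, Nat.div_add_mod']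
    rw [Matrix.diagonal_mul, hS, hS', sylv_add_apply hg (hcol j)]
  have hd : ∏ i, d i ≠ 0 := Finset.prod_ne_zero_iff.mpr fun i _ => sylv_apply_ne_zero k _ _
  have hperm : perm S = (∏ i, d i) * perm S' := by rw [hS_eq, perm_diagonal_mul]
  have hdet : S.det = (∏ i, d i) * S'.det := by
    rw [hS_eq, Matrix.det_mul, Matrix.det_diagonal]
  exact ⟨hperm, hdet, by simp [hperm, hd], by simp [hdet, hd]⟩
end

section
/- Let p = k + q with k, q ≥ 0, set m = 2^p and n = 2^q, fix c ∈ {0, …, 2^k−1}, and let g : {0, …, n−1} → {0, …, m−1} be any function (an output configuration of n fermions on m modes). Let S be the n×n scattering matrix with entries S_{i,j} = H(m)_{g(i), c·n + j}. Then det S ≠ 0 if and only if the map i ↦ g(i) mod n is injective, i.e. the residues g(0) mod n, …, g(n−1) mod n are pairwise distinct (equivalently, they form a permutation of {0, …, n−1}). -/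
def bitSign (q x : ℕ) : ℤ := (-1) ^ ((Finset.range q).filter (fun t => x.testBit t)).card

lemma sylv_apply_s12 (q : ℕ) (i j : Fin (2 ^ q)) : sylv q i j = bitSign q (i.val &&& j.val) := rfl

lemma bitSign_eq_prod (q x : ℕ) :
    bitSign q x = ∏ t ∈ Finset.range q, if x.testBit t then -1 else 1 := by
  rw [Finset.prod_ite, Finset.prod_const, Finset.prod_const, one_pow, mul_one, bitSign]

lemma bitSign_xor (q a b : ℕ) : bitSign q (a ^^^ b) = bitSign q a * bitSign q b := by
  simp only [bitSign_eq_prod, ← Finset.prod_mul_distrib, Nat.testBit_xor]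
  refine Finset.prod_congr rfl fun t _ => ?_
  cases a.testBit t <;> cases b.testBit t <;> norm_num

lemma bitSign_zero (q : ℕ) : bitSign q 0 = 1 := by
  simp [bitSign]

lemma bitSign_ne_zero (q x : ℕ) : bitSign q x ≠ 0 := by
  simp [bitSign]

lemma bitSign_two_pow {q t : ℕ} (ht : t < q) : bitSign q (2 ^ t) = -1 := by
  simp [bitSign_eq_prod, Nat.testBit_two_pow, Finset.prod_ite_eq, ht]

lemma bitSign_add (q k x : ℕ) :
    bitSign (q + k) x = bitSign q (x % 2 ^ q) * bitSign k (x >>> q) := by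
  simp only [bitSign_eq_prod, Finset.prod_range_add, Nat.testBit_shiftRight]
  congr 1
  refine Finset.prod_congr rfl fun t ht => ?_
  simp [Nat.testBit_mod_two_pow, Finset.mem_range.mp ht]

lemma sum_bitSign_and_eq_zero {q d : ℕ} (hd : d < 2 ^ q) (hd0 : d ≠ 0) :
    ∑ j : Fin (2 ^ q), bitSign q (d &&& j.val) = 0 := by
  obtain ⟨t, ht⟩ := Nat.exists_testBit_of_ne_zero hd0
  have htq : t < q := by
    by_contra! h
    have : d < 2 ^ t := hd.trans_le (Nat.pow_le_pow_right two_pos h)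
    simp [Nat.testBit_lt_two_pow this] at ht
  have h2t : 2 ^ t < 2 ^ q := Nat.pow_lt_pow_right one_lt_two htq
  let toggle : Fin (2 ^ q) → Fin (2 ^ q) := fun j =>
    ⟨j.val ^^^ 2 ^ t, Nat.xor_lt_two_pow j.isLt h2t⟩
  have toggle_involutive : Function.Involutive toggle := fun j => by simp [toggle]
  have toggle_neg (j : Fin (2 ^ q)) :
      bitSign q (d &&& (toggle j).val) = -bitSign q (d &&& j.val) := by
    have : d &&& (j.val ^^^ 2 ^ t) = (d &&& j.val) ^^^ 2 ^ t := by
      rw [Nat.and_xor_distrib_left, Nat.and_two_pow, ht]; simp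
    simp only [toggle, this, bitSign_xor, bitSign_two_pow htq, mul_neg_one]
  have := Equiv.sum_comp (toggle_involutive.toPerm toggle)
    fun j : Fin (2 ^ q) => bitSign q (d &&& j.val)
  simp only [Function.Involutive.coe_toPerm, toggle_neg, Finset.sum_neg_distrib] at this
  linarith

lemma sylv_mul_self (q : ℕ) : sylv q * sylv q = (2 ^ q : ℤ) • 1 := by
  ext a b
  have hprod (j : Fin (2 ^ q)) :
      sylv q a j * sylv q j b = bitSign q ((a.val ^^^ b.val) &&& j.val) := by
    rw [sylv_apply_s12, sylv_apply_s12, Nat.and_comm j.val, ← bitSign_xor, Nat.and_xor_distrib_right]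
  rw [Matrix.mul_apply, Finset.sum_congr rfl fun j _ => hprod j]
  by_cases hab : a = b
  · simp [hab, bitSign_zero]
  · have hne : a.val ^^^ b.val ≠ 0 := fun h => hab (Fin.ext (xor_eq_zero_iff.mp h))
    rw [sum_bitSign_and_eq_zero (Nat.xor_lt_two_pow a.isLt b.isLt) hne]
    simp [hab]

lemma det_sylv_ne_zero (q : ℕ) : (sylv q).det ≠ 0 := by
  intro h
  have := congrArg Matrix.det (sylv_mul_self q)
  rw [Matrix.det_mul, h, mul_zero, Matrix.det_smul, Matrix.det_one, mul_one] at this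
  exact absurd this.symm (by positivity)

lemma bitSign_and_mul_two_pow_add {q j : ℕ} (hj : j < 2 ^ q) (k a c : ℕ) :
    bitSign (k + q) (a &&& (c * 2 ^ q + j))
      = bitSign k ((a >>> q) &&& c) * bitSign q ((a % 2 ^ q) &&& j) := by
  have hbits (t : ℕ) :
      (c * 2 ^ q + j).testBit t = if t < q then j.testBit t else c.testBit (t - q) := by
    rw [mul_comm, Nat.testBit_two_pow_mul_add c hj]
  rw [add_comm k q, bitSign_add, mul_comm]
  congr 2 <;> refine Nat.eq_of_testBit_eq fun t => ?_
  · simp [hbits]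
  · by_cases ht : t < q <;> simp [Nat.testBit_mod_two_pow, hbits, ht]

lemma Matrix.det_submatrix_ne_zero_iff {n R : Type*} [Fintype n] [DecidableEq n] [CommRing R]
    {A : Matrix n n R} (hA : A.det ≠ 0) (r : n → n) :
    (A.submatrix r id).det ≠ 0 ↔ Function.Injective r := by
  constructor
  · intro h
    by_contra hr
    obtain ⟨i, i', hii', hne⟩ := Function.not_injective_iff.mp hr
    exact h (Matrix.det_zero_of_row_eq hne (funext fun j => by simp [hii']))
  · intro hr
    let σ := Equiv.ofBijective r (Finite.injective_iff_bijective.mp hr)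
    have hsign : IsUnit ((Equiv.Perm.sign σ : ℤ) : R) :=
      (Equiv.Perm.sign σ).isUnit.map (Int.castRingHom R)
    rw [show A.submatrix r id = A.submatrix σ id from rfl, Matrix.det_permute, ne_eq,
      hsign.mul_right_eq_zero]
    exact hA

/-- fermionic suppression law: for `n = 2^q` fermions entering one per
mode on modes `c·n,…,c·n+n−1` of the `m = 2^(k+q)` mode Sylvester interferometer and
exiting on modes `g(0),…,g(n−1)`, the output is allowed (`det S ≠ 0`) if and only if
the residues `g(i) mod n` are pairwise distinct. -/
theorem stmt12 (k q : ℕ) (c : Fin (2^k)) (g : Fin (2^q) → Fin (2^(k+q)))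
    (col : Fin (2^q) → Fin (2^(k+q))) (hcol : ∀ j, (col j).val = c.val * 2^q + j.val)
    (S : Matrix (Fin (2^q)) (Fin (2^q)) ℤ)
    (hS : ∀ i j, S i j = sylv (k+q) (g i) (col j)) :
    S.det ≠ 0 ↔ Function.Injective (fun i => (g i).val % 2^q) := by
  let r : Fin (2 ^ q) → Fin (2 ^ q) := fun i =>
    ⟨(g i).val % 2 ^ q, Nat.mod_lt _ (Nat.two_pow_pos q)⟩
  have hS_eq : S = Matrix.of fun i j =>
      bitSign k (((g i).val >>> q) &&& c.val) * (sylv q).submatrix r id i j := by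
    ext i j
    rw [hS, sylv_apply_s12, hcol, bitSign_and_mul_two_pow_add j.isLt]
    rfl
  rw [hS_eq, Matrix.det_mul_column,
    mul_ne_zero_iff_left (Finset.prod_ne_zero_iff.mpr fun i _ => bitSign_ne_zero _ _),
    Matrix.det_submatrix_ne_zero_iff (det_sylv_ne_zero q) r]
  exact (Fin.val_injective.of_comp_iff r).symm
end

section
/- For every p ≥ 2, the permanent of the full 2^p × 2^p Sylvester matrix H(2^p) is nonzero. (Equivalently, for n = m = 2^p > 2 the anti-bunching output of n bosons, one per each of the n modes, is never suppressed by the Sylvester interferometer.) -/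
/-!
For a family of rows `ρ : I → (ZMod 2)^q` (repetitions allowed) let `A_q(ρ)` (`charPerm`) be the
permanent of the matrix `(-1)^(ρ i ⬝ w)`, `i ∈ I`, `w ∈ (ZMod 2)^q`. Write a column as `(b, w')`.
A bijection from rows to columns pairs off the rows sent to columns that differ only in `b`, so
it determines a perfect matching `ι` of `I`; summing over the values of `b` within each pair gives
`A_{q+1}(ρ) = ∑_ι ∏_{pairs} (s_r + s_{ι r}) · A_q(ρ'_r + ρ'_{ι r})`,
with `s_i = ±1` the sign of the first coordinate of `ρ i` and `ρ'_i` its tail. Each factor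
`s_r + s_{ι r}` is `0` or `±2`, which yields by induction `A_q(ρ) = 2^(2^q - 1) B` with
`B ≡ [∑ i, ρ i = 0] (mod 2)`: the rows of each subproblem sum to `∑ ρ'_i`, and the number of
matchings pairing only rows with equal first coordinate is a product of two odd double
factorials, odd exactly when the first coordinates sum to `0`. The rows of the Sylvester matrix
are all of `(ZMod 2)^p`, whose sum vanishes once `p ≥ 2`.
-/

namespace SylvesterPermanent

open Finset Nat

lemma eq_zero_or_eq_one (b : ZMod 2) : b = 0 ∨ b = 1 := by
  revert b; decide

section Pairing

/-- Perfect matchings of `I`, as fixed-point-free involutions. -/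
abbrev Pairing (I : Type*) := {ι : Equiv.Perm I // ∀ i, ι (ι i) = i ∧ ι i ≠ i}

variable {I W : Type*}

def flipFst (W : Type*) : Equiv.Perm (ZMod 2 × W) :=
  Equiv.prodCongr (Equiv.addRight 1) (Equiv.refl W)

@[simp] lemma flipFst_apply (x : ZMod 2 × W) : flipFst W x = (x.1 + 1, x.2) := rfl

/-- `F` pairs `i` with the row sent to the column that differs from `F i` only in the first
coordinate. -/
def pairingOf (F : I ≃ ZMod 2 × W) : Pairing I :=
  ⟨F.symm.permCongr (flipFst W), fun i => by
    refine ⟨by simp [add_assoc, show (1 + 1 : ZMod 2) = 0 from rfl], fun h => ?_⟩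
    simp [Equiv.permCongr_apply, F.symm_apply_eq, Prod.ext_iff] at h⟩

lemma pairingOf_eq_iff (F : I ≃ ZMod 2 × W) (ι : Pairing I) :
    pairingOf F = ι ↔ ∀ i, F (ι.1 i) = flipFst W (F i) := by
  simp only [pairingOf, Subtype.ext_iff, Equiv.ext_iff, Equiv.permCongr_apply, Equiv.symm_symm,
    F.symm_apply_eq]
  exact forall_congr' fun _ => eq_comm

variable [LinearOrder I]

abbrev Rep (ι : Pairing I) := {i : I // i < ι.1 i}

lemma lt_apply_apply_of_not_lt (ι : Pairing I) {i : I} (h : ¬ i < ι.1 i) :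
    ι.1 i < ι.1 (ι.1 i) := by
  rw [(ι.2 i).1]
  exact lt_of_le_of_ne (not_lt.mp h) (ι.2 i).2

def pairEquiv (ι : Pairing I) : Rep ι × ZMod 2 ≃ I where
  toFun x := if x.2 = 0 then x.1 else ι.1 x.1
  invFun i := if h : i < ι.1 i then (⟨i, h⟩, 0) else (⟨ι.1 i, lt_apply_apply_of_not_lt ι h⟩, 1)
  left_inv := by
    rintro ⟨r, b⟩
    rcases eq_zero_or_eq_one b with rfl | rfl
    · simp [r.2]
    · simp [(ι.2 r).1, r.2.le]
  right_inv i := by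
    by_cases h : i < ι.1 i
    · simp [h]
    · simp [h, (ι.2 i).1]

@[simp] lemma pairEquiv_zero (ι : Pairing I) (r : Rep ι) : pairEquiv ι (r, 0) = r := rfl

@[simp] lemma pairEquiv_one (ι : Pairing I) (r : Rep ι) : pairEquiv ι (r, 1) = ι.1 r := rfl

lemma apply_pairEquiv (ι : Pairing I) (r : Rep ι) (b : ZMod 2) :
    ι.1 (pairEquiv ι (r, b)) = pairEquiv ι (r, b + 1) := by
  rcases eq_zero_or_eq_one b with rfl | rfl
  · rfl
  · simp [(ι.2 r).1, show (1 + 1 : ZMod 2) = 0 from rfl]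

lemma forall_rep_eq_iff {α : Type*} (ι : Pairing I) (c : I → α) :
    (∀ r : Rep ι, c r = c (ι.1 r)) ↔ ∀ i, c (ι.1 i) = c i := by
  rw [(pairEquiv ι).surjective.forall, Prod.forall]
  refine ⟨fun h r => Fin.forall_fin_two.mpr ⟨(h r).symm, ?_⟩, fun h r => (h r 0).symm⟩
  show c (ι.1 (ι.1 r)) = c (ι.1 r)
  rw [(ι.2 r).1]
  exact h r

lemma card_eq_two_mul_card_rep [Fintype I] (ι : Pairing I) :
    Fintype.card I = 2 * Fintype.card (Rep ι) := by
  rw [← Fintype.card_congr (pairEquiv ι), Fintype.card_prod, ZMod.card, mul_comm]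

@[to_additive]
lemma prod_eq_prod_rep [Fintype I] {M : Type*} [CommMonoid M] (ι : Pairing I) (h : I → M) :
    ∏ i, h i = ∏ r : Rep ι, h r * h (ι.1 r) := by
  rw [← (pairEquiv ι).prod_comp, Fintype.prod_prod_type]
  exact Fintype.prod_congr _ _ fun r => Fin.prod_univ_two _

def ofPairs (ι : Pairing I) (e : Rep ι ≃ W) (β : Rep ι → ZMod 2) : I ≃ ZMod 2 × W :=
  (pairEquiv ι).symm.trans ((Equiv.prodShear e fun r => Equiv.addLeft (β r)).trans
    (Equiv.prodComm _ _))

lemma ofPairs_pairEquiv (ι : Pairing I) (e : Rep ι ≃ W) (β : Rep ι → ZMod 2) (r : Rep ι)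
    (b : ZMod 2) : ofPairs ι e β (pairEquiv ι (r, b)) = (β r + b, e r) := by
  simp [ofPairs]

@[simp] lemma ofPairs_rep (ι : Pairing I) (e : Rep ι ≃ W) (β : Rep ι → ZMod 2) (r : Rep ι) :
    ofPairs ι e β r = (β r, e r) := by
  simpa using ofPairs_pairEquiv ι e β r 0

@[simp] lemma ofPairs_partner (ι : Pairing I) (e : Rep ι ≃ W) (β : Rep ι → ZMod 2) (r : Rep ι) :
    ofPairs ι e β (ι.1 r) = (β r + 1, e r) :=
  ofPairs_pairEquiv ι e β r 1

lemma pairingOf_ofPairs (ι : Pairing I) (e : Rep ι ≃ W) (β : Rep ι → ZMod 2) :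
    pairingOf (ofPairs ι e β) = ι := by
  rw [pairingOf_eq_iff, (pairEquiv ι).surjective.forall]
  rintro ⟨r, b⟩
  simp [apply_pairEquiv, ofPairs_pairEquiv, add_assoc]

lemma injective_snd_of_pairingOf_eq {F : I ≃ ZMod 2 × W} {ι : Pairing I}
    (hF : pairingOf F = ι) : Function.Injective fun r : Rep ι => (F r).2 := by
  intro r r' h
  rw [pairingOf_eq_iff] at hF
  have hfst : (F r').1 = (F r).1 ∨ (F r').1 = (F r).1 + 1 := by
    generalize (F r').1 = a; generalize (F r).1 = b; revert a b; decide
  rcases hfst with h1 | h1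
  · exact (Subtype.ext (F.injective (Prod.ext h1 h.symm))).symm
  · have hr' : (r' : I) = ι.1 r := F.injective (by rw [hF]; exact Prod.ext h1 h.symm)
    have h2 := r'.2
    rw [hr', (ι.2 r).1] at h2
    exact absurd (h2.trans r.2) (lt_irrefl _)

variable [Fintype I] [Fintype W]

noncomputable def pairingOfFiberEquiv (ι : Pairing I) :
    (Rep ι ≃ W) × (Rep ι → ZMod 2) ≃ {F : I ≃ ZMod 2 × W // pairingOf F = ι} := by
  refine Equiv.ofBijective (fun p => ⟨ofPairs ι p.1 p.2, pairingOf_ofPairs ι p.1 p.2⟩)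
    ⟨fun ⟨e, β⟩ ⟨e', β'⟩ h => ?_, fun ⟨F, hF⟩ => ?_⟩
  · have h' (r : Rep ι) : (β r, e r) = (β' r, e' r) := by
      simpa using congrArg (fun G : {F : I ≃ ZMod 2 × W // pairingOf F = ι} => G.1 r) h
    simp only [Prod.mk.injEq] at h' ⊢
    exact ⟨Equiv.ext fun r => (h' r).2, funext fun r => (h' r).1⟩
  · have hcard : Fintype.card (Rep ι) = Fintype.card W := by
      have h1 := card_eq_two_mul_card_rep ι
      rw [Fintype.card_congr F, Fintype.card_prod, ZMod.card] at h1
      omega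
    refine ⟨⟨Equiv.ofBijective _ ((Fintype.bijective_iff_injective_and_card _).mpr
      ⟨injective_snd_of_pairingOf_eq hF, hcard⟩), fun r => (F r).1⟩, Subtype.ext ?_⟩
    rw [pairingOf_eq_iff] at hF
    refine Equiv.ext ((pairEquiv ι).surjective.forall.mpr fun ⟨r, b⟩ => ?_)
    rcases eq_zero_or_eq_one b with rfl | rfl
    · simp
    · simp [hF]

@[simp] lemma pairingOfFiberEquiv_apply_coe (ι : Pairing I)
    (p : (Rep ι ≃ W) × (Rep ι → ZMod 2)) :
    (pairingOfFiberEquiv ι p : I ≃ ZMod 2 × W) = ofPairs ι p.1 p.2 :=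
  rfl

theorem sum_equiv_eq_sum_pairing [DecidableEq I] [DecidableEq W] {R : Type*} [CommSemiring R]
    (f : I → ZMod 2 × W → R) :
    ∑ F : I ≃ ZMod 2 × W, ∏ i, f i (F i) =
      ∑ ι : Pairing I, ∑ e : Rep ι ≃ W,
        ∏ r : Rep ι, ∑ b, f r (b, e r) * f (ι.1 r) (b + 1, e r) := by
  rw [← Fintype.sum_fiberwise pairingOf]
  refine Fintype.sum_congr _ _ fun ι => ?_
  rw [← (pairingOfFiberEquiv ι).sum_comp, Fintype.sum_prod_type]
  refine Fintype.sum_congr _ _ fun e => ?_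
  rw [Fintype.prod_sum]
  refine Fintype.sum_congr _ _ fun β => ?_
  rw [prod_eq_prod_rep ι]
  exact Fintype.prod_congr _ _ fun r => by simp

end Pairing

section Counting

variable {S : Type*}

section Preserving

variable {p : S → Prop} [DecidablePred p]

lemma subtypeCongr_isPairing (α : Pairing {i // p i}) (β : Pairing {i // ¬ p i}) (i : S) :
    α.1.subtypeCongr β.1 (α.1.subtypeCongr β.1 i) = i ∧ α.1.subtypeCongr β.1 i ≠ i := by
  by_cases h : p i
  · rw [Equiv.Perm.subtypeCongr.left_apply _ _ h, Equiv.Perm.subtypeCongr.left_apply_subtype,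
      (α.2 _).1]
    exact ⟨rfl, fun h' => (α.2 ⟨i, h⟩).2 (Subtype.ext h')⟩
  · rw [Equiv.Perm.subtypeCongr.right_apply _ _ h, Equiv.Perm.subtypeCongr.right_apply_subtype,
      (β.2 _).1]
    exact ⟨rfl, fun h' => (β.2 ⟨i, h⟩).2 (Subtype.ext h')⟩

lemma subtypeCongr_apply_mem_iff (α : Equiv.Perm {i // p i}) (β : Equiv.Perm {i // ¬ p i})
    (i : S) : p (α.subtypeCongr β i) ↔ p i := by
  by_cases h : p i
  · simpa [Equiv.Perm.subtypeCongr.left_apply _ _ h, h] using (α ⟨i, h⟩).2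
  · simpa [Equiv.Perm.subtypeCongr.right_apply _ _ h, h] using (β ⟨i, h⟩).2

lemma subtypePerm_isPairing (ι : Pairing S) {q : S → Prop} (h : ∀ i, q (ι.1 i) ↔ q i)
    (i : {i // q i}) : ι.1.subtypePerm h (ι.1.subtypePerm h i) = i ∧ ι.1.subtypePerm h i ≠ i :=
  ⟨Subtype.ext (ι.2 i).1, fun h' => (ι.2 i).2 (congrArg Subtype.val h')⟩

def pairingPreservingEquiv (p : S → Prop) [DecidablePred p] :
    {ι : Pairing S // ∀ i, p (ι.1 i) ↔ p i} ≃ Pairing {i // p i} × Pairing {i // ¬ p i} where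
  toFun ι := (⟨_, subtypePerm_isPairing ι.1 ι.2⟩,
    ⟨_, subtypePerm_isPairing ι.1 fun i => not_congr (ι.2 i)⟩)
  invFun x := ⟨⟨_, subtypeCongr_isPairing x.1 x.2⟩, subtypeCongr_apply_mem_iff x.1.1 x.2.1⟩
  left_inv ι := by
    ext i
    by_cases h : p i <;> simp [h]
  right_inv x := by
    ext i <;> simp [Equiv.Perm.subtypeCongr.left_apply_subtype,
      Equiv.Perm.subtypeCongr.right_apply_subtype]

end Preserving

variable [Fintype S]

lemma sum_zmod_two_eq_card (c : S → ZMod 2) :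
    ∑ i, c i = (Fintype.card {i // c i ≠ 0} : ZMod 2) := by
  rw [Fintype.card_subtype, ← sum_boole]
  exact Fintype.sum_congr _ _ fun i => by generalize c i = a; revert a; decide

variable [DecidableEq S]

theorem card_pairing_mul {m : ℕ} (hS : Fintype.card S = 2 * m) :
    Fintype.card (Pairing S) * (m ! * 2 ^ m) = (2 * m)! := by
  let : LinearOrder S := LinearOrder.lift' _ (Fintype.equivFin S).injective
  have key := sum_equiv_eq_sum_pairing (W := Fin m) fun (_ : S) (_ : ZMod 2 × Fin m) => 1
  have hrep (ι : Pairing S) :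
      Fintype.card (Rep ι ≃ Fin m) * 2 ^ Fintype.card (Rep ι) = m ! * 2 ^ m := by
    have := card_eq_two_mul_card_rep ι
    rw [Fintype.card_equiv (Fintype.equivFinOfCardEq (by omega)),
      show Fintype.card (Rep ι) = m by omega]
  have hcols : Fintype.card S = Fintype.card (ZMod 2 × Fin m) := by simp [hS]
  simp only [prod_const_one, sum_const, Finset.card_univ, smul_eq_mul, mul_one, prod_const,
    ZMod.card, hrep, Fintype.card_equiv (Fintype.equivOfCardEq hcols)] at key
  rw [← hS, key]

lemma odd_doubleFactorial_two_mul_add_one (k : ℕ) : Odd (2 * k + 1)‼ := by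
  induction k with
  | zero => decide
  | succ k ih =>
    rw [show 2 * (k + 1) + 1 = 2 * k + 1 + 2 by ring, doubleFactorial_add_two]
    exact (odd_two_mul_add_one (k + 1)).mul ih

theorem odd_card_pairing (hS : Even (Fintype.card S)) : Odd (Fintype.card (Pairing S)) := by
  obtain ⟨m, hm⟩ := hS
  have key := card_pairing_mul (S := S) (m := m) (by omega)
  cases m with
  | zero => simp_all
  | succ k =>
    have hfac : (2 * (k + 1))! = (2 * k + 1)‼ * ((k + 1)! * 2 ^ (k + 1)) := by
      rw [show 2 * (k + 1) = 2 * k + 1 + 1 by ring, factorial_eq_mul_doubleFactorial,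
        show 2 * k + 1 + 1 = 2 * (k + 1) by ring, doubleFactorial_two_mul]
      ring
    rw [hfac] at key
    rw [Nat.eq_of_mul_eq_mul_right (by positivity) key]
    exact odd_doubleFactorial_two_mul_add_one k

theorem odd_card_pairing_iff : Odd (Fintype.card (Pairing S)) ↔ Even (Fintype.card S) := by
  refine ⟨fun h => ?_, odd_card_pairing⟩
  by_contra hS
  obtain ⟨ι⟩ := Fintype.card_pos_iff.mp h.pos
  let : LinearOrder S := LinearOrder.lift' _ (Fintype.equivFin S).injective
  exact hS ⟨_, (card_eq_two_mul_card_rep ι).trans (two_mul _)⟩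

theorem card_pairing_preserving_eq (hS : Even (Fintype.card S)) (c : S → ZMod 2) :
    (Fintype.card {ι : Pairing S // ∀ i, c (ι.1 i) = c i} : ZMod 2) =
      if ∑ i, c i = 0 then 1 else 0 := by
  have hsplit : Fintype.card {ι : Pairing S // ∀ i, c (ι.1 i) = c i} =
      Fintype.card (Pairing {i // c i = 0}) * Fintype.card (Pairing {i // ¬ c i = 0}) := by
    rw [← Fintype.card_prod, ← Fintype.card_congr (pairingPreservingEquiv _)]
    exact Fintype.card_congr (Equiv.subtypeEquivRight fun ι => forall_congr' fun i => by
      generalize c (ι.1 i) = a; generalize c i = b; revert a b; decide)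
  have hcard := Fintype.card_subtype_compl (fun i => c i = 0)
  have hle := Fintype.card_subtype_le (fun i => c i = 0)
  rw [hsplit, sum_zmod_two_eq_card]
  by_cases h : Even (Fintype.card {i // c i ≠ 0})
  · rw [(ZMod.natCast_eq_zero_iff_even).mpr h, if_pos rfl, ZMod.natCast_eq_one_iff_odd]
    refine (odd_card_pairing ?_).mul (odd_card_pairing h)
    have h' : Even (Fintype.card {i // ¬ c i = 0}) := h
    rw [hcard] at h'
    exact ((Nat.even_sub hle).mp h').mp hS
  · rw [if_neg (mt ZMod.natCast_eq_zero_iff_even.mp h), ZMod.natCast_eq_zero_iff_even]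
    exact (Nat.not_odd_iff_even.mp (mt odd_card_pairing_iff.mp h)).mul_left _

end Counting

section Characters

def sgn (a : ZMod 2) : ℤ := (-1) ^ a.val

lemma sgn_add (a b : ZMod 2) : sgn (a + b) = sgn a * sgn b := by
  revert a b; decide

lemma sum_sgn_mul_sgn (x y : ZMod 2) :
    ∑ b : ZMod 2, sgn (x * b) * sgn (y * (b + 1)) = sgn x + sgn y := by
  revert x y; decide

lemma sgn_add_sgn (x y : ZMod 2) : sgn x + sgn y = 2 * if x = y then sgn x else 0 := by
  revert x y; decide

lemma intCast_sgn (x : ZMod 2) : (sgn x : ZMod 2) = 1 := by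
  revert x; decide

def χ {q : ℕ} (r w : Fin q → ZMod 2) : ℤ := ∏ t, sgn (r t * w t)

lemma χ_add_left {q : ℕ} (r s w : Fin q → ZMod 2) : χ (r + s) w = χ r w * χ s w := by
  simp only [χ, ← prod_mul_distrib, Pi.add_apply, add_mul, sgn_add]

lemma χ_cons {q : ℕ} (r : Fin (q + 1) → ZMod 2) (b : ZMod 2) (w : Fin q → ZMod 2) :
    χ r (Fin.cons b w) = sgn (r 0 * b) * χ (Fin.tail r) w := by
  simp [χ, Fin.prod_univ_succ, Fin.tail]

/-- Rows may repeat; the sum is empty unless `card I = 2 ^ q`. -/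
def charPerm (q : ℕ) (I : Type*) [Fintype I] [DecidableEq I] (ρ : I → Fin q → ZMod 2) : ℤ :=
  ∑ e : I ≃ (Fin q → ZMod 2), ∏ i, χ (ρ i) (e i)

theorem charPerm_succ {I : Type*} [Fintype I] [DecidableEq I] [LinearOrder I] (q : ℕ)
    (ρ : I → Fin (q + 1) → ZMod 2) :
    charPerm (q + 1) I ρ = ∑ ι : Pairing I, (∏ r : Rep ι, (sgn (ρ r 0) + sgn (ρ (ι.1 r) 0))) *
      charPerm q (Rep ι) fun r => Fin.tail (ρ r) + Fin.tail (ρ (ι.1 r)) := by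
  rw [charPerm, ← (Equiv.equivCongr (Equiv.refl I) (Fin.consEquiv fun _ => ZMod 2)).sum_comp]
  have hcons (x : ZMod 2 × (Fin q → ZMod 2)) :
      (Fin.consEquiv fun _ => ZMod 2) x = Fin.cons x.1 x.2 := rfl
  simp only [Equiv.equivCongr_apply_apply, Equiv.refl_symm, Equiv.coe_refl, id, hcons, χ_cons]
  rw [sum_equiv_eq_sum_pairing (fun i x => sgn (ρ i 0 * x.1) * χ (Fin.tail (ρ i)) x.2)]
  refine Fintype.sum_congr _ _ fun ι => ?_
  have hpair (r : Rep ι) (w : Fin q → ZMod 2) :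
      ∑ b : ZMod 2, sgn (ρ r 0 * b) * χ (Fin.tail (ρ r)) w *
        (sgn (ρ (ι.1 r) 0 * (b + 1)) * χ (Fin.tail (ρ (ι.1 r))) w) =
      (sgn (ρ r 0) + sgn (ρ (ι.1 r) 0)) * χ (Fin.tail (ρ r) + Fin.tail (ρ (ι.1 r))) w := by
    rw [χ_add_left, ← sum_sgn_mul_sgn, sum_mul]
    exact Fintype.sum_congr _ _ fun b => by ring
  simp only [hpair, prod_mul_distrib, charPerm, mul_sum]

lemma sum_eq_zero_iff_sum_head_and_sum_tail {I : Type*} [Fintype I] {q : ℕ}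
    (ρ : I → Fin (q + 1) → ZMod 2) :
    ∑ i, ρ i = 0 ↔ ∑ i, ρ i 0 = 0 ∧ ∑ i, Fin.tail (ρ i) = 0 := by
  rw [← Fin.cons_self_tail (∑ i, ρ i)]
  exact Matrix.cons_eq_zero_iff.trans (by simp [Fin.tail, Finset.sum_apply, funext_iff])

lemma charPerm_zero {I : Type*} [Fintype I] [DecidableEq I] (hI : Fintype.card I = 1)
    (ρ : I → Fin 0 → ZMod 2) : charPerm 0 I ρ = 1 := by
  have hcols : Fintype.card I = Fintype.card (Fin 0 → ZMod 2) := by simp [hI]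
  simp [charPerm, χ, Fintype.card_equiv (Fintype.equivOfCardEq hcols), hI]

theorem charPerm_eq_two_pow_mul (q : ℕ) {I : Type*} [Fintype I] [DecidableEq I]
    (hI : Fintype.card I = 2 ^ q) (ρ : I → Fin q → ZMod 2) :
    ∃ B : ℤ, charPerm q I ρ = 2 ^ (2 ^ q - 1) * B ∧
      (B : ZMod 2) = if ∑ i, ρ i = 0 then 1 else 0 := by
  induction q generalizing I with
  | zero => exact ⟨1, by simp [charPerm_zero hI], by simp [Subsingleton.elim (∑ i, ρ i) 0]⟩
  | succ q ih =>
    let : LinearOrder I := LinearOrder.lift' _ (Fintype.equivFin I).injective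
    have hrep (ι : Pairing I) : Fintype.card (Rep ι) = 2 ^ q := by
      have := card_eq_two_mul_card_rep ι
      rw [hI, pow_succ] at this
      omega
    choose B hB hBpar using fun ι : Pairing I =>
      ih (hrep ι) fun r => Fin.tail (ρ r) + Fin.tail (ρ (ι.1 r))
    refine ⟨∑ ι, (∏ r : Rep ι, if ρ r 0 = ρ (ι.1 r) 0 then sgn (ρ r 0) else 0) * B ι, ?_, ?_⟩
    · have hexp : 2 ^ (q + 1) - 1 = 2 ^ q + (2 ^ q - 1) := by
        rw [pow_succ]
        have := q.one_le_two_pow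
        omega
      rw [charPerm_succ, mul_sum]
      refine Fintype.sum_congr _ _ fun ι => ?_
      rw [hB, prod_congr rfl fun r _ => sgn_add_sgn _ _, prod_mul_distrib, prod_const,
        Finset.card_univ, hrep, hexp, pow_add]
      ring
    · have hrows (ι : Pairing I) :
          ∑ r : Rep ι, (Fin.tail (ρ r) + Fin.tail (ρ (ι.1 r))) = ∑ i, Fin.tail (ρ i) :=
        (sum_eq_sum_rep ι fun i => Fin.tail (ρ i)).symm
      push_cast
      simp only [intCast_sgn, prod_boole, mem_univ, true_imp_iff, hBpar, hrows,
        forall_rep_eq_iff _ fun i => ρ i 0,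
        ← sum_mul, sum_boole, ← Fintype.card_subtype]
      rw [card_pairing_preserving_eq ⟨2 ^ q, by rw [hI, pow_succ, mul_two]⟩ (fun i => ρ i 0),
        ite_zero_mul_ite_zero, mul_one]
      simp only [sum_eq_zero_iff_sum_head_and_sum_tail]

end Characters

section Sylvester

def bits (p : ℕ) : Fin (2 ^ p) ≃ (Fin p → ZMod 2) := finFunctionFinEquiv.symm

lemma sgn_mul_bits (p : ℕ) (i j : Fin (2 ^ p)) (t : Fin p) :
    sgn (bits p i t * bits p j t) = if Nat.testBit (i.val &&& j.val) t then -1 else 1 := by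
  have hi : (bits p i t).val = i / 2 ^ t.val % 2 := finFunctionFinEquiv_symm_apply_val i t
  have hj : (bits p j t).val = j / 2 ^ t.val % 2 := finFunctionFinEquiv_symm_apply_val j t
  rw [Nat.testBit_and, Nat.testBit_eq_decide_div_mod_eq, Nat.testBit_eq_decide_div_mod_eq,
    ← hi, ← hj]
  generalize bits p i t = x
  generalize bits p j t = y
  revert x y
  decide

lemma sylv_eq_χ (p : ℕ) (i j : Fin (2 ^ p)) : sylv p i j = χ (bits p i) (bits p j) := by
  rw [sylv, χ, Fintype.prod_congr _ _ (sgn_mul_bits p i j),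
    Fin.prod_univ_eq_prod_range (fun t => if Nat.testBit (i.val &&& j.val) t then -1 else 1),
    prod_ite, prod_const, prod_const_one, mul_one]

lemma perm_sylv (p : ℕ) : perm (sylv p) = charPerm p (Fin (2 ^ p)) (bits p) := by
  rw [charPerm, ← (Equiv.equivCongr (Equiv.refl _) (bits p)).sum_comp]
  simp [perm, sylv_eq_χ]

lemma sum_univ_eq_zero_of_two_le {p : ℕ} (hp : 2 ≤ p) : ∑ v : Fin p → ZMod 2, v = 0 := by
  have : Nontrivial (Fin p) := Fin.nontrivial_iff_two_le.mpr hp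
  ext t
  obtain ⟨s, hs⟩ := exists_ne t
  rw [Finset.sum_apply]
  refine sum_involution (fun v _ => v + Pi.single s 1) (fun v _ => ?_) (fun v _ _ h => ?_)
    (fun _ _ => mem_univ _) (fun v _ => ?_)
  · simp [hs.symm, CharTwo.add_self_eq_zero]
  · simp at h
  · rw [add_assoc, ← Pi.single_add, show (1 + 1 : ZMod 2) = 0 from rfl, Pi.single_zero, add_zero]

end Sylvester

end SylvesterPermanent

open SylvesterPermanent in
/-- for every `p ≥ 2` the permanent of the full `2^p × 2^p` Sylvester
matrix is nonzero (the anti-bunching output of `n = 2^p` bosons, one per mode, is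
never suppressed). -/
theorem stmt14 (p : ℕ) (hp : 2 ≤ p) : perm (sylv p) ≠ 0 := by
  obtain ⟨B, hB, hBpar⟩ := charPerm_eq_two_pow_mul p (Fintype.card_fin _) (bits p)
  rw [(bits p).sum_comp fun v => v, sum_univ_eq_zero_of_two_le hp, if_pos rfl] at hBpar
  rw [perm_sylv, hB]
  exact mul_ne_zero (pow_ne_zero _ two_ne_zero) fun h => by simp [h] at hBpar
end
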